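/- arXiv:2403.17139 — 9 statements merged into one kernel-verified Lean document; each statement's English description precedes it below -/
import Mathlib

section
/- Let K ≥ 2, let m ≥ 1 be an integer, set N = mK, and let α ∈ [0,2]. If σ^A and σ^B are mixed strategies in the Colonel Blotto game B_α(N,K) such that both σ^A and σ^B induce uniform marginals, then the profile (σ^A, σ^B) is a Nash equilibrium, and each player's expected payoff equals K·(2N + αK)/(4N + 2K). -/
open Finset

/-- The set of pure strategies: allocations of `N` units of the resource
over `K` battlefields. -/
def pureStrats (K N : ℕ) : Finset (Fin K → ℕ) := Finset.Nat.antidiagonalTuple K N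

/-- Payoff in the Colonel Blotto game `B_α(N,K)` of playing `s` against `t`:
`π(s,t) = Σ_k [1_{s_k > t_k} + (α/2)·1_{s_k = t_k}]`. -/
noncomputable def payoff (α : ℝ) {K : ℕ} (s t : Fin K → ℕ) : ℝ :=
  ∑ k, ((if t k < s k then (1 : ℝ) else 0) + α / 2 * (if s k = t k then 1 else 0))

/-- `σ` is a mixed strategy: a probability distribution on the pure strategies. -/
def IsMixed (K N : ℕ) (σ : (Fin K → ℕ) → ℝ) : Prop :=
  (∀ s, 0 ≤ σ s) ∧ (∀ s, s ∉ pureStrats K N → σ s = 0) ∧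
    ∑ s ∈ pureStrats K N, σ s = 1

/-- Expected payoff of the mixed strategy `σ` against the mixed strategy `τ`. -/
noncomputable def expPayoff (α : ℝ) (K N : ℕ) (σ τ : (Fin K → ℕ) → ℝ) : ℝ :=
  ∑ s ∈ pureStrats K N, ∑ t ∈ pureStrats K N, σ s * τ t * payoff α s t

/-- `(σA, σB)` is a mixed-strategy Nash equilibrium: both are mixed strategies and
neither player can strictly improve by a unilateral deviation. -/
def IsNashEq (α : ℝ) (K N : ℕ) (σA σB : (Fin K → ℕ) → ℝ) : Prop :=
  IsMixed K N σA ∧ IsMixed K N σB ∧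
    (∀ σ', IsMixed K N σ' → expPayoff α K N σ' σB ≤ expPayoff α K N σA σB) ∧
    (∀ τ', IsMixed K N τ' → expPayoff α K N τ' σA ≤ expPayoff α K N σB σA)

/-- The marginal distribution of `σ` at battlefield `k`, evaluated at `x`. -/
noncomputable def marginal (K N : ℕ) (σ : (Fin K → ℕ) → ℝ) (k : Fin K) (x : ℕ) : ℝ :=
  ∑ s ∈ (pureStrats K N).filter (fun s => s k = x), σ s

/-- `σ` induces uniform marginals on `{0,1,…,2m}` at every battlefield. -/
def UniformMarginals (K N m : ℕ) (σ : (Fin K → ℕ) → ℝ) : Prop :=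
  ∀ k x, marginal K N σ k x = if x ≤ 2 * m then (1 : ℝ) / (2 * m + 1) else 0

/-!
Against an opponent whose marginals are uniform on `{0, …, 2m}`, putting `x` units on a
battlefield earns `(min x (2m+1) + (α/2)·[x ≤ 2m]) / (2m+1)`, which is at most `(x + α/2)/(2m+1)`
with equality for `x ≤ 2m`. Summing over battlefields, every pure strategy earns at most
`(N + Kα/2)/(2m+1)`, and a strategy with uniform marginals never puts more than `2m` units on a
battlefield, so it attains this bound. This common value is `K(2N + αK)/(4N + 2K)` when `N = mK`.
-/

noncomputable def fieldPayoff (α : ℝ) (x y : ℕ) : ℝ :=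
  (if y < x then 1 else 0) + α / 2 * if x = y then 1 else 0

noncomputable def uniformGain (α : ℝ) (n x : ℕ) : ℝ :=
  (∑ y ∈ range n, fieldPayoff α x y) / n

lemma sum_range_fieldPayoff (α : ℝ) (n x : ℕ) :
    ∑ y ∈ range n, fieldPayoff α x y = (min x n : ℕ) + α / 2 * if x < n then 1 else 0 := by
  have hlt : (range n).filter (· < x) = range (min x n) := by ext; simp; omega
  simp only [fieldPayoff, sum_add_distrib, ← mul_sum, sum_ite_eq, sum_boole, mem_range, hlt,
    card_range]

lemma uniformGain_le {α : ℝ} (hα : 0 ≤ α) (n x : ℕ) :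
    uniformGain α n x ≤ (x + α / 2) / n := by
  rw [uniformGain, sum_range_fieldPayoff]
  gcongr
  · exact_mod_cast min_le_left x n
  · split_ifs <;> linarith

lemma uniformGain_of_lt (α : ℝ) {n x : ℕ} (hx : x < n) :
    uniformGain α n x = (x + α / 2) / n := by
  rw [uniformGain, sum_range_fieldPayoff, min_eq_left hx.le, if_pos hx, mul_one]

section Strategies

variable {K N : ℕ} {s : Fin K → ℕ}

lemma sum_eq_of_mem_pureStrats (hs : s ∈ pureStrats K N) : ∑ k, s k = N :=
  Finset.Nat.mem_antidiagonalTuple.1 hs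

lemma le_of_mem_pureStrats (hs : s ∈ pureStrats K N) (k : Fin K) : s k ≤ N :=
  sum_eq_of_mem_pureStrats hs ▸ single_le_sum (fun _ _ => Nat.zero_le _) (mem_univ k)

lemma sum_add_div_eq_of_mem_pureStrats (hs : s ∈ pureStrats K N) (a b : ℝ) :
    ∑ k, ((s k : ℝ) + a) / b = (N + K * a) / b := by
  rw [← sum_div, sum_add_distrib, ← Nat.cast_sum, sum_eq_of_mem_pureStrats hs, sum_const,
    card_univ, Fintype.card_fin, nsmul_eq_mul]

lemma IsMixed.sum_mul_const {σ : (Fin K → ℕ) → ℝ} (hσ : IsMixed K N σ) (c : ℝ) :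
    ∑ s ∈ pureStrats K N, σ s * c = c := by
  rw [← sum_mul, hσ.2.2, one_mul]

lemma sum_uniformGain_le {α : ℝ} (hα : 0 ≤ α) (n : ℕ) (hs : s ∈ pureStrats K N) :
    ∑ k, uniformGain α n (s k) ≤ (N + K * (α / 2)) / n := by
  rw [← sum_add_div_eq_of_mem_pureStrats hs]
  exact sum_le_sum fun k _ => uniformGain_le hα n (s k)

lemma sum_uniformGain_of_lt (α : ℝ) {n : ℕ} (hs : s ∈ pureStrats K N) (hlt : ∀ k, s k < n) :
    ∑ k, uniformGain α n (s k) = (N + K * (α / 2)) / n := by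
  rw [← sum_add_div_eq_of_mem_pureStrats hs]
  exact sum_congr rfl fun k _ => uniformGain_of_lt α (hlt k)

end Strategies

section UniformMarginals

variable {K N m : ℕ} {σ τ : (Fin K → ℕ) → ℝ}

lemma sum_mul_apply_eq_sum_marginal (k : Fin K) (g : ℕ → ℝ) :
    ∑ t ∈ pureStrats K N, τ t * g (t k) = ∑ x ∈ range (N + 1), marginal K N τ k x * g x := by
  rw [← sum_fiberwise_of_maps_to (g := fun t => t k)
    (fun t ht => mem_range_succ_iff.2 (le_of_mem_pureStrats ht k))]
  refine sum_congr rfl fun x _ => ?_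
  rw [marginal, sum_mul]
  exact sum_congr rfl fun t ht => by rw [(mem_filter.1 ht).2]

lemma sum_mul_apply_of_uniformMarginals (h2m : 2 * m ≤ N) (hτ : UniformMarginals K N m τ)
    (k : Fin K) (g : ℕ → ℝ) :
    ∑ t ∈ pureStrats K N, τ t * g (t k) = (∑ x ∈ range (2 * m + 1), g x) / (2 * m + 1) := by
  have hle : (range (N + 1)).filter (· ≤ 2 * m) = range (2 * m + 1) := by ext; simp; omega
  simp only [sum_mul_apply_eq_sum_marginal, hτ k, ite_mul, zero_mul, ← sum_filter, hle, sum_div,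
    one_div_mul_eq_div]

lemma sum_mul_payoff_of_uniformMarginals (α : ℝ) (h2m : 2 * m ≤ N)
    (hτ : UniformMarginals K N m τ) (s : Fin K → ℕ) :
    ∑ t ∈ pureStrats K N, τ t * payoff α s t = ∑ k, uniformGain α (2 * m + 1) (s k) := by
  simp_rw [payoff, mul_sum]
  rw [sum_comm]
  refine sum_congr rfl fun k _ => ?_
  exact (sum_mul_apply_of_uniformMarginals h2m hτ k (fieldPayoff α (s k))).trans
    (by rw [uniformGain]; push_cast; rfl)

lemma expPayoff_eq_sum_uniformGain (α : ℝ) (h2m : 2 * m ≤ N) (hτ : UniformMarginals K N m τ) :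
    expPayoff α K N σ τ =
      ∑ s ∈ pureStrats K N, σ s * ∑ k, uniformGain α (2 * m + 1) (s k) := by
  refine sum_congr rfl fun s _ => ?_
  rw [← sum_mul_payoff_of_uniformMarginals α h2m hτ, mul_sum]
  exact sum_congr rfl fun t _ => mul_assoc _ _ _

lemma lt_of_uniformMarginals (hσ : IsMixed K N σ) (hσu : UniformMarginals K N m σ)
    {s : Fin K → ℕ} (hs : s ∈ pureStrats K N) (hs0 : σ s ≠ 0) (k : Fin K) : s k < 2 * m + 1 := by
  by_contra h
  have hmarg : marginal K N σ k (s k) = 0 := by rw [hσu, if_neg (by omega)]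
  have : σ s ≤ marginal K N σ k (s k) :=
    single_le_sum (fun t _ => hσ.1 t) (mem_filter.2 ⟨hs, rfl⟩)
  exact hs0 (le_antisymm (hmarg ▸ this) (hσ.1 s))

lemma expPayoff_le_of_uniformMarginals {α : ℝ} (hα : 0 ≤ α) (h2m : 2 * m ≤ N)
    (hσ : IsMixed K N σ) (hτ : UniformMarginals K N m τ) :
    expPayoff α K N σ τ ≤ (N + K * (α / 2)) / (2 * m + 1) := by
  rw [expPayoff_eq_sum_uniformGain α h2m hτ]
  refine (sum_le_sum fun s hs => mul_le_mul_of_nonneg_left ?_ (hσ.1 s)).trans_eq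
    (hσ.sum_mul_const _)
  exact_mod_cast sum_uniformGain_le hα (2 * m + 1) hs

lemma expPayoff_eq_of_uniformMarginals (α : ℝ) (h2m : 2 * m ≤ N) (hσ : IsMixed K N σ)
    (hσu : UniformMarginals K N m σ) (hτ : UniformMarginals K N m τ) :
    expPayoff α K N σ τ = (N + K * (α / 2)) / (2 * m + 1) := by
  rw [expPayoff_eq_sum_uniformGain α h2m hτ]
  refine (sum_congr rfl fun s hs => ?_).trans (hσ.sum_mul_const _)
  rcases eq_or_ne (σ s) 0 with hs0 | hs0
  · rw [hs0, zero_mul, zero_mul]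
  · exact_mod_cast congrArg (σ s * ·)
      (sum_uniformGain_of_lt α hs (lt_of_uniformMarginals hσ hσu hs hs0))

end UniformMarginals

theorem stmt0_general (K m N : ℕ) (hK : 2 ≤ K) (hN : N = m * K)
    (α : ℝ) (hα : α ∈ Set.Icc (0 : ℝ) 2)
    (σA σB : (Fin K → ℕ) → ℝ) (hA : IsMixed K N σA) (hB : IsMixed K N σB)
    (hAu : UniformMarginals K N m σA) (hBu : UniformMarginals K N m σB) :
    IsNashEq α K N σA σB ∧
    expPayoff α K N σA σB = (K : ℝ) * (2 * (N : ℝ) + α * K) / (4 * (N : ℝ) + 2 * K) ∧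
    expPayoff α K N σB σA = (K : ℝ) * (2 * (N : ℝ) + α * K) / (4 * (N : ℝ) + 2 * K) := by
  have h2m : 2 * m ≤ N := hN ▸ by nlinarith
  have hvalue : ((N : ℝ) + K * (α / 2)) / (2 * m + 1) =
      (K : ℝ) * (2 * (N : ℝ) + α * K) / (4 * (N : ℝ) + 2 * K) := by
    rw [hN]
    push_cast
    field_simp
    ring
  have hAB := expPayoff_eq_of_uniformMarginals α h2m hA hAu hBu
  have hBA := expPayoff_eq_of_uniformMarginals α h2m hB hBu hAu
  refine ⟨⟨hA, hB, fun σ hσ => ?_, fun τ hτ => ?_⟩, hAB.trans hvalue, hBA.trans hvalue⟩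
  · exact hAB ▸ expPayoff_le_of_uniformMarginals hα.1 h2m hσ hBu
  · exact hBA ▸ expPayoff_le_of_uniformMarginals hα.1 h2m hτ hAu

theorem stmt0 (K m N : ℕ) (hK : 2 ≤ K) (hm : 1 ≤ m) (hN : N = m * K)
    (α : ℝ) (hα : α ∈ Set.Icc (0 : ℝ) 2)
    (σA σB : (Fin K → ℕ) → ℝ) (hA : IsMixed K N σA) (hB : IsMixed K N σB)
    (hAu : UniformMarginals K N m σA) (hBu : UniformMarginals K N m σB) :
    IsNashEq α K N σA σB ∧
    expPayoff α K N σA σB = (K : ℝ) * (2 * (N : ℝ) + α * K) / (4 * (N : ℝ) + 2 * K) ∧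
    expPayoff α K N σB σA = (K : ℝ) * (2 * (N : ℝ) + α * K) / (4 * (N : ℝ) + 2 * K) :=
  stmt0_general K m N hK hN α hα σA σB hA hB hAu hBu
end

section
/- Let K ≥ 2 be even, let m ≥ 1 be an integer, set N = mK, and let α ∈ [0,2]. Let S_0 = { (j, 2m−j, j, 2m−j, …, j, 2m−j) : j = 0, 1, …, 2m } be the set of 2m+1 pure strategies that assign j to every odd-indexed battlefield and 2m−j to every even-indexed battlefield. Then the mixed strategy given by uniform randomization over S_0 is a symmetric equilibrium strategy of the Colonel Blotto game B_α(N,K), and in the resulting equilibrium each player's expected payoff equals K·(m + α/2)/(2m + 1). -/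
open Finset

/- Uniform randomization over the set `S₀` of the `2m+1` pure strategies that assign
`j` to every odd-indexed battlefield and `2m − j` to every even-indexed battlefield,
for `j = 0,1,…,2m` (battlefields are indexed `0,…,K−1`, so odd-indexed battlefields
in 1-based counting are the even indices here). -/
open Classical in
noncomputable def sigma0 (K m : ℕ) : (Fin K → ℕ) → ℝ := fun s =>
  if ∃ j ≤ 2 * m, s = fun k : Fin K => if (k : ℕ) % 2 = 0 then j else 2 * m - j
  then (1 : ℝ) / (2 * m + 1) else 0

/-!
Against `sigma0`, the allocation at every battlefield is uniform on `{0, …, 2m}` (at the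
odd indices through the reflection `j ↦ 2m − j`). Hence a pure strategy `s` earns
`(∑ k, g (s k)) / (2m + 1)`, where `g x = marginalGain m α x` is the total payoff of `x`
against `0, …, 2m`: `g x = min x (2m + 1) + α/2 · [x ≤ 2m] ≤ x + α/2`, with equality
when `x ≤ 2m`.
Summing over the battlefields, no strategy earns more than `(N + Kα/2) / (2m + 1)`,
and every strategy in `S₀` earns exactly that.
-/

lemma sum_range_two_mul_ite_mod_two {M : Type*} [AddCommMonoid M] (c : ℕ) (a b : M) :
    ∑ i ∈ range (2 * c), (if i % 2 = 0 then a else b) = c • (a + b) := by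
  induction c with
  | zero => simp
  | succ c ih =>
    rw [show 2 * (c + 1) = 2 * c + 1 + 1 by ring, sum_range_succ, sum_range_succ, ih,
      if_pos (by omega), if_neg (by omega), succ_nsmul, add_assoc]

/-- The element of `S₀` with parameter `j`. -/
def altStrat (K m j : ℕ) : Fin K → ℕ := fun k => if (k : ℕ) % 2 = 0 then j else 2 * m - j

lemma altStrat_mem_pureStrats {K m N j : ℕ} (hKeven : Even K) (hN : N = m * K)
    (hj : j ≤ 2 * m) : altStrat K m j ∈ pureStrats K N := by
  obtain ⟨c, rfl⟩ := hKeven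
  rw [pureStrats, Nat.mem_antidiagonalTuple]
  unfold altStrat
  rw [Fin.sum_univ_eq_sum_range (fun i => if i % 2 = 0 then j else 2 * m - j),
    ← two_mul, sum_range_two_mul_ite_mod_two, smul_eq_mul, hN,
    show j + (2 * m - j) = 2 * m by omega]
  ring

lemma altStrat_injective {K : ℕ} (hK : 0 < K) (m : ℕ) : Function.Injective (altStrat K m) :=
  fun a b h => by simpa [altStrat] using congrFun h ⟨0, hK⟩

lemma sigma0_eq_ite (K m : ℕ) (s : Fin K → ℕ) :
    sigma0 K m s =
      if s ∈ (range (2 * m + 1)).image (altStrat K m) then (1 : ℝ) / (2 * m + 1) else 0 := by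
  refine if_congr ?_ rfl rfl
  simp only [mem_image, mem_range, Nat.lt_succ_iff]
  exact exists_congr fun j => and_congr_right fun _ => eq_comm

lemma sum_sigma0_mul {K m N : ℕ} (hK : 0 < K) (hKeven : Even K) (hN : N = m * K)
    (f : (Fin K → ℕ) → ℝ) :
    ∑ t ∈ pureStrats K N, sigma0 K m t * f t =
      (∑ j ∈ range (2 * m + 1), f (altStrat K m j)) / (2 * m + 1) := by
  have hsub : (range (2 * m + 1)).image (altStrat K m) ⊆ pureStrats K N := by
    simp only [image_subset_iff, mem_range, Nat.lt_succ_iff]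
    exact fun j hj => altStrat_mem_pureStrats hKeven hN hj
  simp only [sigma0_eq_ite, ite_mul, zero_mul]
  rw [sum_ite_mem, inter_eq_right.mpr hsub,
    sum_image fun a _ b _ h => altStrat_injective hK m h, ← mul_sum, one_div_mul_eq_div]

lemma isMixed_sigma0 {K m N : ℕ} (hK : 0 < K) (hKeven : Even K) (hN : N = m * K) :
    IsMixed K N (sigma0 K m) := by
  refine ⟨fun s => ?_, fun s hs => ?_, ?_⟩
  · rw [sigma0_eq_ite]
    split_ifs <;> positivity
  · rw [sigma0_eq_ite, if_neg]
    simp only [mem_image, mem_range, Nat.lt_succ_iff, not_exists, not_and]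
    rintro j hj rfl
    exact hs (altStrat_mem_pureStrats hKeven hN hj)
  · have : (2 * m + 1 : ℝ) ≠ 0 := by positivity
    simpa [this] using sum_sigma0_mul hK hKeven hN (fun _ => 1)

noncomputable def marginalGain (m : ℕ) (α : ℝ) (x : ℕ) : ℝ :=
  ∑ j ∈ range (2 * m + 1),
    ((if j < x then (1 : ℝ) else 0) + α / 2 * (if x = j then 1 else 0))

lemma marginalGain_eq (m : ℕ) (α : ℝ) (x : ℕ) :
    marginalGain m α x = (min x (2 * m + 1) : ℕ) + α / 2 * (if x ≤ 2 * m then 1 else 0) := by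
  have hfilter : (range (2 * m + 1)).filter (· < x) = range (min x (2 * m + 1)) := by
    ext j
    simp only [mem_filter, mem_range, lt_min_iff]
    omega
  rw [marginalGain, sum_add_distrib, ← mul_sum, sum_boole, hfilter, card_range,
    sum_ite_eq (range (2 * m + 1)) x fun _ => (1 : ℝ)]
  simp only [mem_range, Nat.lt_succ_iff]

lemma marginalGain_le (m : ℕ) {α : ℝ} (hα : 0 ≤ α) (x : ℕ) :
    marginalGain m α x ≤ x + α / 2 := by
  rw [marginalGain_eq]
  split_ifs with hx
  · rw [min_eq_left (by omega), mul_one]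
  · have : ((min x (2 * m + 1) : ℕ) : ℝ) ≤ x := by exact_mod_cast min_le_left _ _
    linarith

lemma marginalGain_of_le (α : ℝ) {m x : ℕ} (hx : x ≤ 2 * m) :
    marginalGain m α x = x + α / 2 := by
  rw [marginalGain_eq, if_pos hx, min_eq_left (by omega), mul_one]

lemma sum_payoff_altStrat (α : ℝ) {K : ℕ} (m : ℕ) (s : Fin K → ℕ) :
    ∑ j ∈ range (2 * m + 1), payoff α s (altStrat K m j) = ∑ k, marginalGain m α (s k) := by
  simp only [payoff, altStrat]
  rw [sum_comm]
  refine sum_congr rfl fun k _ => ?_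
  split_ifs
  · rfl
  · refine (sum_congr rfl fun j _ => ?_).trans (sum_range_reflect _ (2 * m + 1))
    rw [Nat.add_sub_cancel]

lemma sum_cast_add_of_mem_pureStrats {K N : ℕ} {s : Fin K → ℕ} (hs : s ∈ pureStrats K N)
    (c : ℝ) : ∑ k, ((s k : ℝ) + c) = N + K * c := by
  rw [sum_add_distrib, ← Nat.cast_sum, Nat.mem_antidiagonalTuple.mp hs, sum_const, card_univ,
    Fintype.card_fin, nsmul_eq_mul]

lemma sum_marginalGain_le {K m N : ℕ} {α : ℝ} (hα : 0 ≤ α) {s : Fin K → ℕ}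
    (hs : s ∈ pureStrats K N) : ∑ k, marginalGain m α (s k) ≤ N + K * (α / 2) :=
  (sum_le_sum fun k _ => marginalGain_le m hα (s k)).trans_eq
    (sum_cast_add_of_mem_pureStrats hs _)

lemma sum_marginalGain_altStrat {K m N j : ℕ} (hKeven : Even K) (hN : N = m * K) (α : ℝ)
    (hj : j ≤ 2 * m) : ∑ k, marginalGain m α (altStrat K m j k) = N + K * (α / 2) := by
  rw [← sum_cast_add_of_mem_pureStrats (altStrat_mem_pureStrats hKeven hN hj)]
  refine sum_congr rfl fun k _ => marginalGain_of_le α ?_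
  unfold altStrat
  split_ifs <;> omega

lemma expPayoff_sigma0_right {K m N : ℕ} (hK : 0 < K) (hKeven : Even K) (hN : N = m * K)
    (α : ℝ) (σ : (Fin K → ℕ) → ℝ) :
    expPayoff α K N σ (sigma0 K m) =
      ∑ s ∈ pureStrats K N, σ s * ((∑ k, marginalGain m α (s k)) / (2 * m + 1)) := by
  refine sum_congr rfl fun s _ => ?_
  simp only [mul_assoc]
  rw [← mul_sum, sum_sigma0_mul hK hKeven hN, sum_payoff_altStrat]

lemma expPayoff_sigma0_right_le {K m N : ℕ} (hK : 0 < K) (hKeven : Even K) (hN : N = m * K)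
    {α : ℝ} (hα : 0 ≤ α) {σ : (Fin K → ℕ) → ℝ} (hσ : IsMixed K N σ) :
    expPayoff α K N σ (sigma0 K m) ≤ (N + K * (α / 2)) / (2 * m + 1) := by
  obtain ⟨hσ_nonneg, -, hσ_sum⟩ := hσ
  rw [expPayoff_sigma0_right hK hKeven hN]
  calc ∑ s ∈ pureStrats K N, σ s * ((∑ k, marginalGain m α (s k)) / (2 * m + 1))
      ≤ ∑ s ∈ pureStrats K N, σ s * ((N + K * (α / 2)) / (2 * m + 1)) := by
        gcongr with s hs
        · exact hσ_nonneg s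
        · exact sum_marginalGain_le hα hs
    _ = (N + K * (α / 2)) / (2 * m + 1) := by rw [← sum_mul, hσ_sum, one_mul]

lemma expPayoff_sigma0_self {K m N : ℕ} (hK : 0 < K) (hKeven : Even K) (hN : N = m * K)
    (α : ℝ) : expPayoff α K N (sigma0 K m) (sigma0 K m) = (N + K * (α / 2)) / (2 * m + 1) := by
  rw [expPayoff_sigma0_right hK hKeven hN, sum_sigma0_mul hK hKeven hN,
    sum_congr rfl fun j hj => by
      rw [sum_marginalGain_altStrat hKeven hN α (Nat.lt_succ_iff.mp (mem_range.mp hj))],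
    sum_const, card_range, nsmul_eq_mul]
  have : (2 * m + 1 : ℝ) ≠ 0 := by positivity
  push_cast
  field_simp

lemma isNashEq_self_of_forall_expPayoff_le {α : ℝ} {K N : ℕ} {σ : (Fin K → ℕ) → ℝ}
    (hσ : IsMixed K N σ)
    (hbest : ∀ σ', IsMixed K N σ' → expPayoff α K N σ' σ ≤ expPayoff α K N σ σ) :
    IsNashEq α K N σ σ :=
  ⟨hσ, hσ, hbest, hbest⟩

theorem stmt1_general (K m N : ℕ) (hK : 2 ≤ K) (hKeven : Even K) (hN : N = m * K)
    (α : ℝ) (hα : α ∈ Set.Icc (0 : ℝ) 2) :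
    IsNashEq α K N (sigma0 K m) (sigma0 K m) ∧
    expPayoff α K N (sigma0 K m) (sigma0 K m)
      = (K : ℝ) * ((m : ℝ) + α / 2) / (2 * (m : ℝ) + 1) := by
  have hKpos : 0 < K := by omega
  have hvalue := expPayoff_sigma0_self hKpos hKeven hN α
  refine ⟨isNashEq_self_of_forall_expPayoff_le (isMixed_sigma0 hKpos hKeven hN)
    fun σ hσ => ?_, ?_⟩
  · rw [hvalue]
    exact expPayoff_sigma0_right_le hKpos hKeven hN hα.1 hσ
  · rw [hvalue, hN]
    push_cast
    ring

theorem stmt1 (K m N : ℕ) (hK : 2 ≤ K) (hKeven : Even K) (hm : 1 ≤ m) (hN : N = m * K)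
    (α : ℝ) (hα : α ∈ Set.Icc (0 : ℝ) 2) :
    IsNashEq α K N (sigma0 K m) (sigma0 K m) ∧
    expPayoff α K N (sigma0 K m) (sigma0 K m)
      = (K : ℝ) * ((m : ℝ) + α / 2) / (2 * (m : ℝ) + 1) :=
  stmt1_general K m N hK hKeven hN α hα
end

section
/- In the Arad–Rubinstein game B_0(120,6), the mixed strategy given by uniform randomization over the 41 pure strategies { (j, 40−j, j, 40−j, j, 40−j) : j = 0, 1, …, 40 } is a symmetric equilibrium strategy, and in the resulting equilibrium each player's expected payoff equals 120/41. -/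
open Finset

def T20 (j : ℕ) : Fin 6 → ℕ := fun k => if (k : ℕ) % 2 = 0 then j else 40 - j

lemma T20_mem {j : ℕ} (hj : j ≤ 40) : T20 j ∈ pureStrats 6 120 := by
  simp only [pureStrats, Finset.Nat.mem_antidiagonalTuple]
  norm_num [T20, Fin.sum_univ_six, show ((3:Fin 6):ℕ)=3 from rfl, show ((4:Fin 6):ℕ)=4 from rfl, show ((5:Fin 6):ℕ)=5 from rfl]
  omega

lemma T20_inj : Function.Injective T20 := by
  intro a b h
  have := congrFun h 0
  simpa [T20] using this

lemma sigma0_eq (s : Fin 6 → ℕ) :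
    sigma0 6 20 s = if ∃ j ≤ 40, s = T20 j then (1:ℝ)/41 else 0 := by
  unfold sigma0 T20
  norm_num

lemma sum_sigma0_mul_s2 (f : (Fin 6 → ℕ) → ℝ) :
    ∑ s ∈ pureStrats 6 120, sigma0 6 20 s * f s
      = ∑ j ∈ Finset.range 41, (1/41 : ℝ) * f (T20 j) := by
  have hsub : (Finset.range 41).image T20 ⊆ pureStrats 6 120 := by
    intro s hs
    simp only [Finset.mem_image, Finset.mem_range] at hs
    obtain ⟨j, hj, rfl⟩ := hs
    exact T20_mem (by omega)
  rw [← Finset.sum_subset hsub]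
  · rw [Finset.sum_image (fun a _ b _ h => T20_inj h)]
    refine Finset.sum_congr rfl fun j hj => ?_
    simp only [Finset.mem_range] at hj
    rw [sigma0_eq, if_pos ⟨j, by omega, rfl⟩]
  · intro s _ hs
    rw [sigma0_eq, if_neg, zero_mul]
    rintro ⟨j, hj, rfl⟩
    exact hs (Finset.mem_image.2 ⟨j, Finset.mem_range.2 (by omega), rfl⟩)

lemma count_base (c : ℕ) :
    ∑ j ∈ Finset.range 41, (if j < c then (1:ℝ) else 0) = (min c 41 : ℕ) := by
  rw [Finset.sum_boole]
  congr 1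
  rw [show (Finset.range 41).filter (fun j => j < c) = Finset.range (min c 41) by
    ext x; simp; omega]
  rw [Finset.card_range]

lemma countdown (c : ℕ) (k : Fin 6) :
    ∑ j ∈ Finset.range 41, (if T20 j k < c then (1:ℝ) else 0) = (min c 41 : ℕ) := by
  unfold T20
  rcases Nat.even_or_odd (k : ℕ) with hk | hk
  · simp only [if_pos (Nat.even_iff.mp hk)]
    exact count_base c
  · have hk1 : (k:ℕ) % 2 = 1 := Nat.odd_iff.mp hk
    simp only [hk1, Nat.one_ne_zero, if_false]
    have hrefl := Finset.sum_range_reflect (fun j => if 40 - j < c then (1:ℝ) else 0) 41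
    rw [← hrefl]
    rw [show ∑ j ∈ Finset.range 41, (if 40 - (41 - 1 - j) < c then (1:ℝ) else 0)
        = ∑ j ∈ Finset.range 41, (if j < c then (1:ℝ) else 0) from
      Finset.sum_congr rfl fun j hj => by
        have := Finset.mem_range.mp hj
        congr 1
        simp only [eq_iff_iff]
        omega]
    exact count_base c

lemma g_eq (s : Fin 6 → ℕ) :
    ∑ t ∈ pureStrats 6 120, sigma0 6 20 t * payoff 0 s t
      = ((∑ k : Fin 6, min (s k) 41 : ℕ) : ℝ) / 41 := by
  rw [sum_sigma0_mul_s2 (fun t => payoff 0 s t)]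
  have hp : ∀ j, payoff 0 s (T20 j) = ∑ k, (if T20 j k < s k then (1:ℝ) else 0) := by
    intro j; simp [payoff]
  simp only [hp]
  rw [← Finset.mul_sum, Finset.sum_comm]
  simp only [countdown]
  push_cast
  ring

lemma g_le (s : Fin 6 → ℕ) (hs : s ∈ pureStrats 6 120) :
    ∑ t ∈ pureStrats 6 120, sigma0 6 20 t * payoff 0 s t ≤ 120 / 41 := by
  rw [g_eq]
  have hsum : ∑ k, s k = 120 := by
    simpa [pureStrats, Finset.Nat.mem_antidiagonalTuple] using hs
  have h1 : (∑ k : Fin 6, min (s k) 41) ≤ 120 := by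
    calc ∑ k : Fin 6, min (s k) 41 ≤ ∑ k, s k :=
        Finset.sum_le_sum fun k _ => min_le_left _ _
      _ = 120 := hsum
  have h2 : ((∑ k : Fin 6, min (s k) 41 : ℕ) : ℝ) ≤ 120 := by exact_mod_cast h1
  linarith

lemma g_T {j : ℕ} (hj : j ≤ 40) :
    ∑ t ∈ pureStrats 6 120, sigma0 6 20 t * payoff 0 (T20 j) t = 120 / 41 := by
  rw [g_eq]
  have : (∑ k : Fin 6, min (T20 j k) 41) = 120 := by
    norm_num [T20, Fin.sum_univ_six, show ((3:Fin 6):ℕ)=3 from rfl,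
      show ((4:Fin 6):ℕ)=4 from rfl, show ((5:Fin 6):ℕ)=5 from rfl]
    omega
  rw [this]
  norm_num

lemma mixed_sigma0 : IsMixed 6 120 (sigma0 6 20) := by
  refine ⟨fun s => ?_, fun s hs => ?_, ?_⟩
  · rw [sigma0_eq]; split <;> norm_num
  · rw [sigma0_eq, if_neg]
    rintro ⟨j, hj, rfl⟩
    exact hs (T20_mem hj)
  · have h := sum_sigma0_mul_s2 (fun _ => (1:ℝ))
    simp only [mul_one] at h
    rw [h, Finset.sum_const, Finset.card_range]
    norm_num

lemma expPayoff_sigma0 (σ' : (Fin 6 → ℕ) → ℝ) :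
    expPayoff 0 6 120 σ' (sigma0 6 20)
      = ∑ s ∈ pureStrats 6 120,
          σ' s * ∑ t ∈ pureStrats 6 120, sigma0 6 20 t * payoff 0 s t := by
  unfold expPayoff
  refine Finset.sum_congr rfl fun s _ => ?_
  rw [Finset.mul_sum]
  exact Finset.sum_congr rfl fun t _ => by ring

lemma expPayoff_le (σ' : (Fin 6 → ℕ) → ℝ) (h : IsMixed 6 120 σ') :
    expPayoff 0 6 120 σ' (sigma0 6 20) ≤ 120 / 41 := by
  rw [expPayoff_sigma0]
  calc ∑ s ∈ pureStrats 6 120,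
        σ' s * ∑ t ∈ pureStrats 6 120, sigma0 6 20 t * payoff 0 s t
      ≤ ∑ s ∈ pureStrats 6 120, σ' s * (120 / 41) :=
        Finset.sum_le_sum fun s hs =>
          mul_le_mul_of_nonneg_left (g_le s hs) (h.1 s)
    _ = (∑ s ∈ pureStrats 6 120, σ' s) * (120 / 41) := by rw [Finset.sum_mul]
    _ = 120 / 41 := by rw [h.2.2, one_mul]

lemma expPayoff_self : expPayoff 0 6 120 (sigma0 6 20) (sigma0 6 20) = 120 / 41 := by
  rw [expPayoff_sigma0]
  rw [sum_sigma0_mul_s2 (fun s => ∑ t ∈ pureStrats 6 120, sigma0 6 20 t * payoff 0 s t)]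
  rw [show ∑ j ∈ Finset.range 41,
      (1/41 : ℝ) * ∑ t ∈ pureStrats 6 120, sigma0 6 20 t * payoff 0 (T20 j) t
      = ∑ j ∈ Finset.range 41, (1/41 : ℝ) * (120/41) from
    Finset.sum_congr rfl fun j hj => by
      have hj' := Finset.mem_range.mp hj
      rw [g_T (by omega : j ≤ 40)]]
  rw [Finset.sum_const, Finset.card_range]
  norm_num

theorem stmt2 :
    IsNashEq 0 6 120 (sigma0 6 20) (sigma0 6 20) ∧
    expPayoff 0 6 120 (sigma0 6 20) (sigma0 6 20) = 120 / 41 := by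
  refine ⟨⟨mixed_sigma0, mixed_sigma0, fun σ' h => ?_, fun τ' h => ?_⟩, expPayoff_self⟩
  · rw [expPayoff_self]; exact expPayoff_le σ' h
  · rw [expPayoff_self]; exact expPayoff_le τ' h
end

section
/- In the Arad–Rubinstein game B_0(120,6), any pure strategy that allocates a strictly positive number of units to only one or two battlefields (and zero to the remaining battlefields) is not used with positive probability in any Nash equilibrium. -/
open Finset

/-! Auxiliary development -/


def vv : Fin 6 → ℕ := fun k => 8 * k.val

def shiftS (j : Fin 6) : Fin 6 → ℕ := fun k => vv (k + j)

lemma shiftS_mem (j : Fin 6) : shiftS j ∈ pureStrats 6 120 := by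
  rw [pureStrats, Finset.Nat.mem_antidiagonalTuple]
  have : ∑ k : Fin 6, shiftS j k = ∑ k : Fin 6, vv k :=
    Fintype.sum_equiv (Equiv.addRight j) _ _ (fun k => rfl)
  rw [this]; decide

lemma keyZ (x : ℕ) : (40 : ℤ) - x ≤ 8 * ∑ j : Fin 6, (if x < vv j then (1:ℤ) else 0) := by
  simp only [Fin.sum_univ_six, vv]
  norm_num
  split_ifs <;> omega

lemma keyR (x : ℕ) : (40 : ℝ) - x ≤ 8 * ∑ j : Fin 6, (if x < vv j then (1:ℝ) else 0) := by
  have h := keyZ x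
  have hc : ((∑ j : Fin 6, (if x < vv j then (1:ℤ) else 0) : ℤ) : ℝ)
      = ∑ j : Fin 6, (if x < vv j then (1:ℝ) else 0) := by
    push_cast
    rfl
  calc (40:ℝ) - x = ((40 - (x:ℤ) : ℤ) : ℝ) := by push_cast; ring
  _ ≤ ((8 * ∑ j : Fin 6, (if x < vv j then (1:ℤ) else 0) : ℤ) : ℝ) := Int.cast_le.2 h
  _ = 8 * ∑ j : Fin 6, (if x < vv j then (1:ℝ) else 0) := by rw [Int.cast_mul, hc]; norm_num

lemma payoff_zero (s t : Fin 6 → ℕ) :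
    payoff 0 s t = ∑ k, (if t k < s k then (1 : ℝ) else 0) := by
  unfold payoff
  simp

/-- Against any pure strategy, the six shifts win at least 15 battles in total. -/
lemma shift_sum_ge (t : Fin 6 → ℕ) (ht : t ∈ pureStrats 6 120) :
    (15 : ℝ) ≤ ∑ j : Fin 6, payoff 0 (shiftS j) t := by
  rw [pureStrats, Finset.Nat.mem_antidiagonalTuple] at ht
  have hswap : ∑ j : Fin 6, payoff 0 (shiftS j) t
      = ∑ k : Fin 6, ∑ j : Fin 6, (if t k < vv j then (1:ℝ) else 0) := by
    simp only [payoff_zero]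
    rw [Finset.sum_comm]
    refine Finset.sum_congr rfl (fun k _ => ?_)
    exact Fintype.sum_equiv (Equiv.addLeft k) _ _ (fun j => rfl)
  rw [hswap]
  have h2 : ∑ k : Fin 6, ((40 : ℝ) - t k)
      ≤ ∑ k : Fin 6, 8 * ∑ j : Fin 6, (if t k < vv j then (1:ℝ) else 0) :=
    Finset.sum_le_sum (fun k _ => keyR (t k))
  have h3 : ∑ k : Fin 6, ((40 : ℝ) - t k) = 120 := by
    rw [Finset.sum_sub_distrib]
    have : ∑ k : Fin 6, ((t k : ℝ)) = 120 := by
      rw [← Nat.cast_sum, ht]; norm_num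
    rw [this]
    norm_num
  rw [h3, ← Finset.mul_sum] at h2
  linarith

/-- The guaranteeing mixed strategy: uniform on the six shifts. -/
noncomputable def sstar : (Fin 6 → ℕ) → ℝ :=
  fun u => (∑ j : Fin 6, if u = shiftS j then (1:ℝ) else 0) / 6

lemma sstar_mixed : IsMixed 6 120 sstar := by
  refine ⟨fun u => ?_, fun u hu => ?_, ?_⟩
  · apply div_nonneg _ (by norm_num)
    exact Finset.sum_nonneg (fun j _ => by positivity)
  · unfold sstar
    have : ∀ j : Fin 6, (if u = shiftS j then (1:ℝ) else 0) = 0 := by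
      intro j
      rw [if_neg]
      rintro rfl
      exact hu (shiftS_mem j)
    simp [this]
  · unfold sstar
    rw [← Finset.sum_div, Finset.sum_comm]
    have : ∀ j : Fin 6, ∑ u ∈ pureStrats 6 120, (if u = shiftS j then (1:ℝ) else 0) = 1 := by
      intro j
      rw [Finset.sum_ite_eq' (pureStrats 6 120) (shiftS j) (fun _ => (1:ℝ)),
        if_pos (shiftS_mem j)]
    rw [Finset.sum_congr rfl (fun j _ => this j)]
    norm_num

/-- expPayoff in "linear in σ" normal form. -/
lemma expPayoff_eq (α : ℝ) (σ τ : (Fin 6 → ℕ) → ℝ) :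
    expPayoff α 6 120 σ τ
      = ∑ u ∈ pureStrats 6 120, σ u * (∑ t ∈ pureStrats 6 120, τ t * payoff α u t) := by
  unfold expPayoff
  refine Finset.sum_congr rfl (fun u _ => ?_)
  rw [Finset.mul_sum]
  exact Finset.sum_congr rfl (fun t _ => by ring)

/-- Any pure strategy with at most two battlefields receiving a positive
allocation wins at most 2 battles. -/
lemma payoff_le_two (s : Fin 6 → ℕ)
    (hfew : (Finset.univ.filter (fun k => 0 < s k)).card ≤ 2)
    (t : Fin 6 → ℕ) : payoff 0 s t ≤ 2 := by
  rw [payoff_zero]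
  have h1 : ∑ k, (if t k < s k then (1 : ℝ) else 0)
      ≤ ∑ k, (if 0 < s k then (1 : ℝ) else 0) := by
    refine Finset.sum_le_sum (fun k _ => ?_)
    by_cases h : t k < s k
    · rw [if_pos h, if_pos (by omega)]
    · rw [if_neg h]
      positivity
  have h2 : ∑ k, (if 0 < s k then (1 : ℝ) else 0)
      = ((Finset.univ.filter (fun k => 0 < s k)).card : ℝ) := by
    rw [Finset.sum_boole]
  have h3 : ((Finset.univ.filter (fun k => 0 < s k)).card : ℝ) ≤ 2 := by
    exact_mod_cast hfew
  linarith

set_option maxRecDepth 8000 in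
/-- sstar guarantees at least 5/2 against every mixed strategy. -/
lemma sstar_guarantee (τ : (Fin 6 → ℕ) → ℝ) (hτ : IsMixed 6 120 τ) :
    (5/2 : ℝ) ≤ expPayoff 0 6 120 sstar τ := by
  obtain ⟨hτ0, -, hτ1⟩ := hτ
  rw [expPayoff_eq]
  have e1 : ∀ u ∈ pureStrats 6 120,
      sstar u * (∑ t ∈ pureStrats 6 120, τ t * payoff 0 u t)
      = (∑ j : Fin 6, if u = shiftS j
          then (∑ t ∈ pureStrats 6 120, τ t * payoff 0 u t) else 0) / 6 := by
    intro u _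
    unfold sstar
    rw [div_mul_eq_mul_div, Finset.sum_mul]
    congr 1
    exact Finset.sum_congr rfl (fun j _ => by split_ifs <;> simp)
  rw [Finset.sum_congr rfl e1, ← Finset.sum_div, Finset.sum_comm]
  have e2 : ∀ j : Fin 6,
      ∑ u ∈ pureStrats 6 120,
        (if u = shiftS j then (∑ t ∈ pureStrats 6 120, τ t * payoff 0 u t) else 0)
      = ∑ t ∈ pureStrats 6 120, τ t * payoff 0 (shiftS j) t := by
    intro j
    rw [Finset.sum_ite_eq' (pureStrats 6 120) (shiftS j)
      (fun u => ∑ t ∈ pureStrats 6 120, τ t * payoff 0 u t), if_pos (shiftS_mem j)]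
  rw [Finset.sum_congr rfl (fun j _ => e2 j)]
  have hG : (15:ℝ) ≤ ∑ j : Fin 6, ∑ t ∈ pureStrats 6 120, τ t * payoff 0 (shiftS j) t := by
    rw [Finset.sum_comm]
    have hstep : ∀ t ∈ pureStrats 6 120,
        τ t * 15 ≤ ∑ j : Fin 6, τ t * payoff 0 (shiftS j) t := by
      intro t ht
      rw [← Finset.mul_sum]
      exact mul_le_mul_of_nonneg_left (shift_sum_ge t ht) (hτ0 t)
    calc (15:ℝ) = ∑ t ∈ pureStrats 6 120, τ t * 15 := by
          rw [← Finset.sum_mul, hτ1, one_mul]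
    _ ≤ _ := Finset.sum_le_sum hstep
  linarith

/-- The main support lemma: a pure strategy on ≤ 2 battlefields cannot be in the
support of a best response. -/
lemma support_lemma (s : Fin 6 → ℕ) (hs : s ∈ pureStrats 6 120)
    (hfew : (Finset.univ.filter (fun k => 0 < s k)).card ≤ 2)
    (σ τ : (Fin 6 → ℕ) → ℝ) (hσ : IsMixed 6 120 σ) (hτ : IsMixed 6 120 τ)
    (hbr : ∀ σ', IsMixed 6 120 σ' → expPayoff 0 6 120 σ' τ ≤ expPayoff 0 6 120 σ τ) :
    σ s = 0 := by
  obtain ⟨hσ0, hσz, hσ1⟩ := hσ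
  by_contra hne
  have hpos : 0 < σ s := lt_of_le_of_ne (hσ0 s) (Ne.symm hne)
  set σ' : (Fin 6 → ℕ) → ℝ :=
    fun u => σ u - (if u = s then σ s else 0) + σ s * sstar u with hσ'def
  obtain ⟨hst0, hstz, hst1⟩ := sstar_mixed
  have hmix' : IsMixed 6 120 σ' := by
    refine ⟨fun u => ?_, fun u hu => ?_, ?_⟩
    · rcases eq_or_ne u s with h | h
      · have he : σ' u = σ s * sstar u := by simp [hσ'def, h]
        rw [he]
        exact mul_nonneg hpos.le (hst0 u)
      · have he : σ' u = σ u + σ s * sstar u := by simp [hσ'def, h]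
        rw [he]
        exact add_nonneg (hσ0 u) (mul_nonneg hpos.le (hst0 u))
    · have h1 : σ u = 0 := hσz u hu
      have h2 : sstar u = 0 := hstz u hu
      have h3 : u ≠ s := fun h => hu (h ▸ hs)
      simp [hσ'def, h1, h2, h3]
    · simp only [hσ'def]
      rw [Finset.sum_add_distrib, Finset.sum_sub_distrib, hσ1,
        Finset.sum_ite_eq' (pureStrats 6 120) s (fun _ => σ s), if_pos hs,
        ← Finset.mul_sum, hst1]
      ring
  have hgs : (∑ t ∈ pureStrats 6 120, τ t * payoff 0 s t) ≤ 2 := by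
    obtain ⟨hτ0, -, hτ1⟩ := hτ
    have hstep : ∀ t ∈ pureStrats 6 120, τ t * payoff 0 s t ≤ τ t * 2 := fun t _ =>
      mul_le_mul_of_nonneg_left (payoff_le_two s hfew t) (hτ0 t)
    have h := Finset.sum_le_sum hstep
    rw [← Finset.sum_mul, hτ1, one_mul] at h
    exact h
  have hsplit : expPayoff 0 6 120 σ' τ
      = expPayoff 0 6 120 σ τ - σ s * (∑ t ∈ pureStrats 6 120, τ t * payoff 0 s t)
        + σ s * expPayoff 0 6 120 sstar τ := by
    rw [expPayoff_eq 0 σ' τ, expPayoff_eq 0 σ τ, expPayoff_eq 0 sstar τ]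
    have e : ∀ u ∈ pureStrats 6 120,
        σ' u * (∑ t ∈ pureStrats 6 120, τ t * payoff 0 u t)
        = σ u * (∑ t ∈ pureStrats 6 120, τ t * payoff 0 u t)
          - (if u = s then σ s * (∑ t ∈ pureStrats 6 120, τ t * payoff 0 u t) else 0)
          + σ s * (sstar u * (∑ t ∈ pureStrats 6 120, τ t * payoff 0 u t)) := by
      intro u _
      simp only [hσ'def]
      split_ifs <;> ring
    rw [Finset.sum_congr rfl e, Finset.sum_add_distrib, Finset.sum_sub_distrib,
      Finset.sum_ite_eq' (pureStrats 6 120) s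
        (fun u => σ s * (∑ t ∈ pureStrats 6 120, τ t * payoff 0 u t)), if_pos hs,
      ← Finset.mul_sum]
  have hguar := sstar_guarantee τ hτ
  have hcontra := hbr σ' hmix'
  rw [hsplit] at hcontra
  nlinarith

theorem stmt6 (s : Fin 6 → ℕ) (hs : s ∈ pureStrats 6 120)
    (hfew : (Finset.univ.filter (fun k => 0 < s k)).card ≤ 2) :
    ∀ σA σB, IsNashEq 0 6 120 σA σB → σA s = 0 ∧ σB s = 0 := by
  intro σA σB ⟨hA, hB, hbrA, hbrB⟩
  exact ⟨support_lemma s hs hfew σA σB hA hB hbrA,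
    support_lemma s hs hfew σB σA hB hA hbrB⟩
end

section
/- Let N ≥ 1, K ≥ 2, and let α be a real number with α < 2/K. Then in the Colonel Blotto game B_α(N,K), no pure strategy is weakly dominated by any other pure strategy. -/
open Finset

/-- The pure strategy `s` is weakly dominated by the pure strategy `sh`. -/
def WeaklyDominatedBy (α : ℝ) (K N : ℕ) (s sh : Fin K → ℕ) : Prop :=
  (∀ t ∈ pureStrats K N, payoff α s t ≤ payoff α sh t) ∧
  (∃ t ∈ pureStrats K N, payoff α s t < payoff α sh t)

theorem stmt7 (N K : ℕ) (hN : 1 ≤ N) (hK : 2 ≤ K) (α : ℝ) (hα : α < 2 / (K : ℝ))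
    (s sh : Fin K → ℕ) (hs : s ∈ pureStrats K N) (hsh : sh ∈ pureStrats K N)
    (hne : sh ≠ s) : ¬ WeaklyDominatedBy α K N s sh := by

  rintro ⟨hdom, -⟩
  have hK0 : (0:ℝ) < K := by
    have : (0:ℕ) < K := by omega
    exact_mod_cast this
  have hsum_s : ∑ k, s k = N := Finset.Nat.mem_antidiagonalTuple.mp hs
  have hsum_sh : ∑ k, sh k = N := Finset.Nat.mem_antidiagonalTuple.mp hsh
  have hex : ∃ k, sh k < s k := by
    by_contra h
    push_neg at h
    apply hne
    have heq : ∀ i ∈ Finset.univ, s i = sh i :=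
      (Finset.sum_eq_sum_iff_of_le (fun i _ => h i)).mp (hsum_s.trans hsum_sh.symm)
    funext k
    exact (heq k (Finset.mem_univ k)).symm
  obtain ⟨k0, hk0⟩ := hex
  have key := hdom sh hsh
  set c := (Finset.univ.filter (fun k => sh k < s k)).card with hc
  set e := (Finset.univ.filter (fun k : Fin K => s k = sh k)).card with he
  have hc1 : 1 ≤ c := by
    apply Finset.card_pos.mpr
    exact ⟨k0, Finset.mem_filter.mpr ⟨Finset.mem_univ k0, hk0⟩⟩
  have heK : e ≤ K := by
    have := Finset.card_filter_le (Finset.univ : Finset (Fin K)) (fun k => s k = sh k)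
    simpa using this
  have h1 : payoff α s sh = (c : ℝ) + α / 2 * (e : ℝ) := by
    unfold payoff
    rw [Finset.sum_add_distrib, ← Finset.mul_sum]
    rw [Finset.sum_boole, Finset.sum_boole]
  have h2 : payoff α sh sh = α / 2 * (K : ℝ) := by
    unfold payoff
    simp [lt_irrefl, mul_comm]
  rw [h1, h2] at key
  have hcr : (1:ℝ) ≤ (c : ℝ) := by exact_mod_cast hc1
  have her : (e : ℝ) ≤ (K : ℝ) := by exact_mod_cast heK
  have hαK : α * K < 2 := by
    rw [lt_div_iff₀ hK0] at hα
    linarith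
  rcases le_or_gt α 0 with hα0 | hα0
  · nlinarith [mul_nonpos_of_nonpos_of_nonneg hα0 (sub_nonneg.mpr her)]
  · nlinarith [mul_nonneg hα0.le (Nat.cast_nonneg e : (0:ℝ) ≤ e)]
end

section
/- In the Arad–Rubinstein game B_0(120,6), no pure strategy is weakly dominated by any other pure strategy. -/
open Finset

theorem stmt8 (s sh : Fin 6 → ℕ) (hs : s ∈ pureStrats 6 120) (hsh : sh ∈ pureStrats 6 120)
    (hne : sh ≠ s) : ¬ WeaklyDominatedBy 0 6 120 s sh := by
  rintro ⟨hle, -⟩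
  have hsum : ∑ i, s i = ∑ i, sh i := by
    rw [pureStrats, Finset.Nat.mem_antidiagonalTuple] at hs hsh
    rw [hs, hsh]
  -- there is a field where sh j < s j
  have hj : ∃ j, sh j < s j := by
    by_contra h
    push_neg at h
    apply hne
    funext i
    by_contra hi
    have hlt : s i < sh i := lt_of_le_of_ne (h i) (Ne.symm hi)
    have : ∑ i, s i < ∑ i, sh i :=
      Finset.sum_lt_sum (fun i _ => h i) ⟨i, Finset.mem_univ i, hlt⟩
    omega
  obtain ⟨j, hjlt⟩ := hj
  have h1 : payoff 0 s sh ≤ payoff 0 sh sh := hle sh hsh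
  have h2 : payoff 0 sh sh = 0 := by simp [payoff]
  have h3 : (0 : ℝ) < payoff 0 s sh := by
    unfold payoff
    apply Finset.sum_pos' (fun k _ => by positivity)
    refine ⟨j, Finset.mem_univ j, ?_⟩
    simp [hjlt]
  linarith
end

section
/- Let K ≥ 2 be odd, let m ≥ 1 be an integer, and set N = mK. Then there exists a mixed strategy σ on the set of pure strategies S = { s ∈ ℕ^K : s_1+⋯+s_K = N } such that for every battlefield k ∈ {1,…,K}, the marginal distribution of σ at coordinate k is the uniform distribution on {0,1,…,2m}. -/
open Finset

/-- second coordinate value -/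
def bval (m u : ℕ) : ℕ := (u + m) % (2 * m + 1)

/-- third coordinate value -/
def cval (m u : ℕ) : ℕ := 3 * m - u - bval m u

/-- the pure strategy played when the random seed is `u` -/
def strat (m K : ℕ) (u : ℕ) : Fin K → ℕ := fun k =>
  if (k : ℕ) = 0 then u
  else if (k : ℕ) = 1 then bval m u
  else if (k : ℕ) = 2 then cval m u
  else if (k : ℕ) % 2 = 1 then u else 2 * m - u

lemma bval_eq (m u : ℕ) (h : u ≤ 2 * m) :
    bval m u = if u ≤ m then u + m else u - (m + 1) := by
  unfold bval
  split_ifs with h1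
  · exact Nat.mod_eq_of_lt (by omega)
  · rw [show u + m = (u - (m + 1)) + (2 * m + 1) by omega, Nat.add_mod_right]
    exact Nat.mod_eq_of_lt (by omega)

lemma parity_sum (m u r : ℕ) (hu : u ≤ 2 * m) :
    ∑ j ∈ Finset.range (2 * r), (if j % 2 = 0 then u else 2 * m - u) = 2 * m * r := by
  induction r with
  | zero => simp
  | succ r ih =>
    have h1 : (2 * r) % 2 = 0 := by omega
    have h2 : (2 * r + 1) % 2 = 1 := by omega
    rw [show 2 * (r + 1) = 2 * r + 1 + 1 by ring, Finset.sum_range_succ,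
      Finset.sum_range_succ, ih, h1, h2]
    norm_num
    have : 2 * m * (r + 1) = 2 * m * r + 2 * m := by ring
    omega

lemma strat_sum (m K u : ℕ) (hK : 3 ≤ K) (hKodd : Odd K) (hu : u ≤ 2 * m) :
    ∑ k : Fin K, strat m K u k = m * K := by
  obtain ⟨r, hr⟩ : ∃ r, K = 2 * r + 3 := by
    obtain ⟨t, ht⟩ := hKodd; exact ⟨t - 1, by omega⟩
  have hb := bval_eq m u hu
  have : ∑ k : Fin K, strat m K u k
      = ∑ i ∈ Finset.range K, (if i = 0 then u
          else if i = 1 then bval m u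
          else if i = 2 then cval m u
          else if i % 2 = 1 then u else 2 * m - u) := by
    rw [← Fin.sum_univ_eq_sum_range]
    rfl
  rw [this, ← Finset.sum_range_add_sum_Ico _ (show 3 ≤ K from hK)]
  have h3 : ∑ i ∈ Finset.range 3, (if i = 0 then u
          else if i = 1 then bval m u
          else if i = 2 then cval m u
          else if i % 2 = 1 then u else 2 * m - u) = u + bval m u + cval m u := by
    simp [Finset.sum_range_succ]
  have hico : ∑ i ∈ Finset.Ico 3 K, (if i = 0 then u
          else if i = 1 then bval m u
          else if i = 2 then cval m u
          else if i % 2 = 1 then u else 2 * m - u) = 2 * m * r := by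
    rw [Finset.sum_Ico_eq_sum_range]
    have heq : ∀ j ∈ Finset.range (K - 3), (if 3 + j = 0 then u
          else if 3 + j = 1 then bval m u
          else if 3 + j = 2 then cval m u
          else if (3 + j) % 2 = 1 then u else 2 * m - u)
        = (if j % 2 = 0 then u else 2 * m - u) := by
      intro j _
      have h0 : ¬ (3 + j = 0) := by omega
      have h1 : ¬ (3 + j = 1) := by omega
      have h2 : ¬ (3 + j = 2) := by omega
      rw [if_neg h0, if_neg h1, if_neg h2]
      by_cases hp : j % 2 = 0
      · rw [if_pos (by omega : (3 + j) % 2 = 1), if_pos hp]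
      · rw [if_neg (by omega : ¬ (3 + j) % 2 = 1), if_neg hp]
    rw [Finset.sum_congr rfl heq, show K - 3 = 2 * r by omega]
    exact parity_sum m u r hu
  rw [h3, hico]
  have hc : u + bval m u + cval m u = 3 * m := by
    unfold cval; split_ifs at hb <;> omega
  rw [hc]; subst hr; ring

lemma strat_le (m K u : ℕ) (hu : u ≤ 2 * m) (k : Fin K) : strat m K u k ≤ 2 * m := by
  have hb := bval_eq m u hu
  unfold strat cval
  split_ifs at hb ⊢ <;> omega

lemma strat_injOn (m K : ℕ) (k : Fin K) (u u' : ℕ) (hu : u ≤ 2 * m) (hu' : u' ≤ 2 * m)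
    (h : strat m K u k = strat m K u' k) : u = u' := by
  have hb := bval_eq m u hu
  have hb' := bval_eq m u' hu'
  unfold strat cval at h
  split_ifs at hb hb' h <;> omega

/-- inverse of `u ↦ strat m K u k` as a function of `x`, for kv = (k:ℕ) -/
def sinv (m kv x : ℕ) : ℕ :=
  if kv = 0 then x
  else if kv = 1 then (if m ≤ x then x - m else x + m + 1)
  else if kv = 2 then (if x % 2 = 0 then m - x / 2 else 2 * m - (x - 1) / 2)
  else if kv % 2 = 1 then x else 2 * m - x

lemma sinv_le (m kv x : ℕ) (hx : x ≤ 2 * m) : sinv m kv x ≤ 2 * m := by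
  unfold sinv; split_ifs <;> omega

lemma strat_sinv (m K : ℕ) (k : Fin K) (x : ℕ) (hx : x ≤ 2 * m) :
    strat m K (sinv m (k : ℕ) x) k = x := by
  have hle := sinv_le m (k : ℕ) x hx
  have hb := bval_eq m (sinv m (k : ℕ) x) hle
  unfold strat cval
  unfold sinv at hb hle ⊢
  split_ifs at hb hle ⊢ <;> omega

theorem stmt9 (K m N : ℕ) (hK : 2 ≤ K) (hKodd : Odd K) (hm : 1 ≤ m) (hN : N = m * K) :
    ∃ σ, IsMixed K N σ ∧ UniformMarginals K N m σ := by
  have hK3 : 3 ≤ K := by obtain ⟨t, ht⟩ := hKodd; omega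
  have hmem : ∀ u, u ∈ Finset.range (2 * m + 1) → strat m K u ∈ pureStrats K N := by
    intro u hu
    rw [pureStrats, Finset.Nat.mem_antidiagonalTuple]
    rw [strat_sum m K u hK3 hKodd (by simpa using Nat.lt_succ_iff.mp (Finset.mem_range.mp hu)), hN]
  have hM0 : (2 * (m : ℝ) + 1) ≠ 0 := by positivity
  refine ⟨fun s => ∑ u ∈ Finset.range (2 * m + 1),
      if s = strat m K u then (2 * (m : ℝ) + 1)⁻¹ else 0, ⟨?_, ?_, ?_⟩, ?_⟩
  · intro s
    apply Finset.sum_nonneg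
    intro u _
    split <;> positivity
  · intro s hs
    apply Finset.sum_eq_zero
    intro u hu
    rw [if_neg]
    intro he
    exact hs (he ▸ hmem u hu)
  · rw [Finset.sum_comm]
    have : ∀ u ∈ Finset.range (2 * m + 1),
        (∑ s ∈ pureStrats K N, if s = strat m K u then (2 * (m : ℝ) + 1)⁻¹ else 0)
          = (2 * (m : ℝ) + 1)⁻¹ := by
      intro u hu
      rw [Finset.sum_ite_eq' (pureStrats K N) (strat m K u), if_pos (hmem u hu)]
    rw [Finset.sum_congr rfl this, Finset.sum_const, Finset.card_range, nsmul_eq_mul]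
    push_cast
    field_simp
  · intro k x
    rw [marginal, Finset.sum_comm]
    have hfil : ∀ u ∈ Finset.range (2 * m + 1),
        (∑ s ∈ (pureStrats K N).filter (fun s => s k = x),
            if s = strat m K u then (2 * (m : ℝ) + 1)⁻¹ else 0)
          = if strat m K u k = x then (2 * (m : ℝ) + 1)⁻¹ else 0 := by
      intro u hu
      rw [Finset.sum_ite_eq' ((pureStrats K N).filter (fun s => s k = x)) (strat m K u)]
      simp [Finset.mem_filter, hmem u hu]
    rw [Finset.sum_congr rfl hfil]
    by_cases hx : x ≤ 2 * m
    · rw [if_pos hx]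
      rw [Finset.sum_eq_single_of_mem (sinv m (k : ℕ) x)
        (Finset.mem_range.mpr (by have := sinv_le m (k : ℕ) x hx; omega))]
      · rw [if_pos (strat_sinv m K k x hx), one_div]
      · intro u hu hne
        rw [if_neg]
        intro he
        exact hne (strat_injOn m K k u (sinv m (k : ℕ) x)
          (by have := Finset.mem_range.mp hu; omega) (sinv_le m (k : ℕ) x hx)
          (by rw [he, strat_sinv m K k x hx]))
    · rw [if_neg hx]
      apply Finset.sum_eq_zero
      intro u hu
      rw [if_neg]
      intro he
      exact hx (he ▸ strat_le m K u (by have := Finset.mem_range.mp hu; omega) k)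
end

section
/- Let α ∈ [0,2] and consider the Colonel Blotto game B_α(6,3). Let S_a = {(2,2,2), (3,3,0), (3,0,3), (0,3,3), (4,1,1), (1,4,1), (1,1,4)} and S_b = {(4,2,0), (4,0,2), (2,4,0), (2,0,4), (0,4,2), (0,2,4)}. Then the mixed strategy σ that assigns probability 1/10 to each pure strategy in S_a, probability 1/20 to each pure strategy in S_b, and probability 0 to all other pure strategies, induces the uniform marginal distribution on {0,1,2,3,4} on each of the three battlefields and is a symmetric equilibrium strategy of B_α(6,3). -/
open Finset

/-- The mixed strategy for `B_α(6,3)` that puts probability `1/10` on each element of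
`S_a = {(2,2,2),(3,3,0),(3,0,3),(0,3,3),(4,1,1),(1,4,1),(1,1,4)}`, probability `1/20`
on each element of `S_b = {(4,2,0),(4,0,2),(2,4,0),(2,0,4),(0,4,2),(0,2,4)}`, and
probability `0` on every other pure strategy. -/
noncomputable def sigmaEx3 : (Fin 3 → ℕ) → ℝ := fun s =>
  if s ∈ ({![2,2,2], ![3,3,0], ![3,0,3], ![0,3,3], ![4,1,1], ![1,4,1], ![1,1,4]} :
      Finset (Fin 3 → ℕ)) then 1 / 10
  else if s ∈ ({![4,2,0], ![4,0,2], ![2,4,0], ![2,0,4], ![0,4,2], ![0,2,4]} :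
      Finset (Fin 3 → ℕ)) then 1 / 20
  else 0

/-! ### Auxiliary definitions and lemmas -/

/-- The support of `sigmaEx3`. -/
def SsupX : Finset (Fin 3 → ℕ) :=
  {![2,2,2], ![3,3,0], ![3,0,3], ![0,3,3], ![4,1,1], ![1,4,1], ![1,1,4],
   ![4,2,0], ![4,0,2], ![2,4,0], ![2,0,4], ![0,4,2], ![0,2,4]}

lemma subX : SsupX ⊆ pureStrats 3 6 := by decide

lemma sig_zero : ∀ s ∉ SsupX, sigmaEx3 s = 0 := by
  intro s hs
  rw [sigmaEx3]
  simp only [SsupX, Finset.mem_insert, Finset.mem_singleton] at hs ⊢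
  rw [if_neg (by tauto), if_neg (by tauto)]

lemma sum_restrict (f : (Fin 3 → ℕ) → ℝ) (hf : ∀ s ∉ SsupX, f s = 0) :
    ∑ s ∈ pureStrats 3 6, f s = ∑ s ∈ SsupX, f s :=
  (Finset.sum_subset subX (fun x _ hx => hf x hx)).symm

lemma sum_Ssup : ∑ s ∈ SsupX, sigmaEx3 s = 1 := by
  rw [SsupX]
  rw [Finset.sum_insert (by decide), Finset.sum_insert (by decide), Finset.sum_insert (by decide),
    Finset.sum_insert (by decide), Finset.sum_insert (by decide), Finset.sum_insert (by decide),
    Finset.sum_insert (by decide), Finset.sum_insert (by decide), Finset.sum_insert (by decide),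
    Finset.sum_insert (by decide), Finset.sum_insert (by decide), Finset.sum_insert (by decide),
    Finset.sum_singleton]
  norm_num (config := { decide := true }) [sigmaEx3]

lemma marg (k : Fin 3) (x : ℕ) :
    marginal 3 6 sigmaEx3 k x = if x ≤ 4 then (1:ℝ)/5 else 0 := by
  rw [marginal, Finset.sum_filter,
    sum_restrict _ (fun s hs => by rw [sig_zero s hs, ite_self])]
  by_cases hx : x ≤ 4
  · rw [if_pos hx]
    fin_cases k <;> interval_cases x <;>
    · rw [SsupX]
      rw [Finset.sum_insert (by decide), Finset.sum_insert (by decide), Finset.sum_insert (by decide),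
        Finset.sum_insert (by decide), Finset.sum_insert (by decide), Finset.sum_insert (by decide),
        Finset.sum_insert (by decide), Finset.sum_insert (by decide), Finset.sum_insert (by decide),
        Finset.sum_insert (by decide), Finset.sum_insert (by decide), Finset.sum_insert (by decide),
        Finset.sum_singleton]
      norm_num (config := { decide := true }) [sigmaEx3]
  · rw [if_neg hx]
    have h0 : ((0:ℕ) = x) = False := by simp; omega
    have h1 : ((1:ℕ) = x) = False := by simp; omega
    have h2 : ((2:ℕ) = x) = False := by simp; omega
    have h3 : ((3:ℕ) = x) = False := by simp; omega
    have h4 : ((4:ℕ) = x) = False := by simp; omega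
    fin_cases k <;>
      simp [SsupX, Finset.sum_insert, Matrix.cons_val_zero, Matrix.cons_val_one,
        Matrix.head_cons, h0, h1, h2, h3, h4]

/-- Per-battlefield payoff. -/
noncomputable def fld (α : ℝ) (a b : ℕ) : ℝ :=
  (if b < a then (1:ℝ) else 0) + α / 2 * (if a = b then 1 else 0)

/-- Expected per-battlefield payoff of allocating `a` against the uniform marginal. -/
noncomputable def gfun (α : ℝ) (a : ℕ) : ℝ :=
  ∑ x ∈ Finset.range 7, (if x ≤ 4 then (1:ℝ)/5 else 0) * fld α a x

lemma gval (α : ℝ) (a : ℕ) (ha : a ≤ 6) :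
    gfun α a = if a ≤ 4 then a/5 + α/10 else 1 := by
  interval_cases a <;> norm_num [gfun, fld, Finset.sum_range_succ] <;> ring

lemma gle (α : ℝ) (hα : 0 ≤ α) (a : ℕ) (ha : a ≤ 6) : gfun α a ≤ a/5 + α/10 := by
  rw [gval α a ha]
  split_ifs with h
  · exact le_refl _
  · have : (5:ℝ) ≤ a := by exact_mod_cast (by omega : 5 ≤ a)
    linarith

lemma mem_pure (s : Fin 3 → ℕ) (hs : s ∈ pureStrats 3 6) : s 0 + s 1 + s 2 = 6 := by
  rw [pureStrats, Finset.Nat.mem_antidiagonalTuple, Fin.sum_univ_three] at hs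
  exact hs

lemma G_eq (α : ℝ) (s : Fin 3 → ℕ) :
    ∑ t ∈ pureStrats 3 6, sigmaEx3 t * payoff α s t = ∑ k, gfun α (s k) := by
  have step1 : ∑ t ∈ pureStrats 3 6, sigmaEx3 t * payoff α s t
      = ∑ k, ∑ t ∈ pureStrats 3 6, sigmaEx3 t * fld α (s k) (t k) := by
    rw [Finset.sum_comm]
    exact Finset.sum_congr rfl fun t _ => by
      rw [payoff, Finset.mul_sum]; rfl
  rw [step1]
  refine Finset.sum_congr rfl fun k _ => ?_
  have hmap : ∀ t ∈ pureStrats 3 6, t k ∈ Finset.range 7 := by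
    intro t ht
    have hsum : ∑ i, t i = 6 := by
      rw [pureStrats, Finset.Nat.mem_antidiagonalTuple] at ht; exact ht
    have : t k ≤ 6 := hsum ▸ Finset.single_le_sum (fun i _ => Nat.zero_le _) (Finset.mem_univ k)
    exact Finset.mem_range.2 (by omega)
  rw [← Finset.sum_fiberwise_of_maps_to (g := fun t => t k) hmap
    (fun t => sigmaEx3 t * fld α (s k) (t k))]
  rw [gfun]
  refine Finset.sum_congr rfl fun x _ => ?_
  rw [← marg k x, marginal, Finset.sum_mul]
  refine Finset.sum_congr rfl fun t ht => ?_
  rw [Finset.mem_filter] at ht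
  rw [ht.2]

lemma sum_g_le (α : ℝ) (hα : 0 ≤ α) (s : Fin 3 → ℕ) (hs : s ∈ pureStrats 3 6) :
    ∑ k, gfun α (s k) ≤ 6/5 + 3*α/10 := by
  have h6 := mem_pure s hs
  have h0 : s 0 ≤ 6 := by omega
  have h1 : s 1 ≤ 6 := by omega
  have h2 : s 2 ≤ 6 := by omega
  rw [Fin.sum_univ_three]
  have c : ((s 0 : ℝ) + s 1 + s 2) = 6 := by exact_mod_cast congrArg (Nat.cast (R := ℝ)) h6
  have := gle α hα (s 0) h0
  have := gle α hα (s 1) h1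
  have := gle α hα (s 2) h2
  linarith

lemma gsum (α : ℝ) (a b c : ℕ) (ha : a ≤ 4) (hb : b ≤ 4) (hc : c ≤ 4)
    (habc : a + b + c = 6) : gfun α a + gfun α b + gfun α c = 6/5 + 3*α/10 := by
  rw [gval α a (by omega), gval α b (by omega), gval α c (by omega),
    if_pos ha, if_pos hb, if_pos hc]
  have : ((a:ℝ) + b + c) = 6 := by exact_mod_cast congrArg (Nat.cast (R := ℝ)) habc
  linarith

lemma sum_g_eq (α : ℝ) (s : Fin 3 → ℕ) (hs : s ∈ SsupX) :
    ∑ k, gfun α (s k) = 6/5 + 3*α/10 := by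
  fin_cases hs <;>
    · rw [Fin.sum_univ_three]
      exact gsum α _ _ _ (by decide) (by decide) (by decide) (by decide)

lemma expPayoff_eq_s11 (α : ℝ) (σ' : (Fin 3 → ℕ) → ℝ) :
    expPayoff α 3 6 σ' sigmaEx3 = ∑ s ∈ pureStrats 3 6, σ' s * ∑ k, gfun α (s k) := by
  rw [expPayoff]
  refine Finset.sum_congr rfl fun s _ => ?_
  rw [← G_eq α s, Finset.mul_sum]
  exact Finset.sum_congr rfl fun t _ => mul_assoc _ _ _

lemma mixed_sigma : IsMixed 3 6 sigmaEx3 := by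
  refine ⟨fun s => ?_, fun s hs => sig_zero s (fun h => hs (subX h)), ?_⟩
  · rw [sigmaEx3]; split_ifs <;> norm_num
  · rw [sum_restrict sigmaEx3 sig_zero]; exact sum_Ssup

lemma expPayoff_sigma (α : ℝ) : expPayoff α 3 6 sigmaEx3 sigmaEx3 = 6/5 + 3*α/10 := by
  rw [expPayoff_eq_s11,
    sum_restrict _ (fun s hs => by rw [sig_zero s hs, zero_mul])]
  have : ∑ s ∈ SsupX, sigmaEx3 s * ∑ k, gfun α (s k)
      = ∑ s ∈ SsupX, sigmaEx3 s * (6/5 + 3*α/10) :=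
    Finset.sum_congr rfl fun s hs => by rw [sum_g_eq α s hs]
  rw [this, ← Finset.sum_mul, sum_Ssup, one_mul]

lemma expPayoff_le_s11 (α : ℝ) (hα : 0 ≤ α) (σ' : (Fin 3 → ℕ) → ℝ) (hσ' : IsMixed 3 6 σ') :
    expPayoff α 3 6 σ' sigmaEx3 ≤ expPayoff α 3 6 sigmaEx3 sigmaEx3 := by
  rw [expPayoff_sigma, expPayoff_eq_s11]
  calc ∑ s ∈ pureStrats 3 6, σ' s * ∑ k, gfun α (s k)
      ≤ ∑ s ∈ pureStrats 3 6, σ' s * (6/5 + 3*α/10) :=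
        Finset.sum_le_sum fun s hs =>
          mul_le_mul_of_nonneg_left (sum_g_le α hα s hs) (hσ'.1 s)
    _ = 6/5 + 3*α/10 := by rw [← Finset.sum_mul, hσ'.2.2, one_mul]

theorem stmt11 (α : ℝ) (hα : α ∈ Set.Icc (0 : ℝ) 2) :
    IsMixed 3 6 sigmaEx3 ∧
    (∀ k x, marginal 3 6 sigmaEx3 k x = if x ≤ 4 then (1 : ℝ) / 5 else 0) ∧
    IsNashEq α 3 6 sigmaEx3 sigmaEx3 := by
  obtain ⟨hα0, -⟩ := hα
  exact ⟨mixed_sigma, marg,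
    mixed_sigma, mixed_sigma,
    fun σ' h => expPayoff_le_s11 α hα0 σ' h,
    fun τ' h => expPayoff_le_s11 α hα0 τ' h⟩
end

section
/- Let N ≥ 1, K ≥ 2, and let α be a real number with α ≥ 2(K−1)/K. Then every pure strategy s of the Colonel Blotto game B_α(N,K) is a symmetric pure-strategy Nash equilibrium strategy; that is, the profile (s, s) is a Nash equilibrium of B_α(N,K). -/
open Finset

lemma payoff_self (α : ℝ) {K : ℕ} (s : Fin K → ℕ) :
    payoff α s s = α / 2 * K := by
  simp [payoff, Finset.mul_sum]
  ring

lemma payoff_le_key {K N : ℕ} (hK : 2 ≤ K) {α : ℝ}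
    (hα : 2 * ((K : ℝ) - 1) / K ≤ α)
    {s t : Fin K → ℕ} (hs : ∑ k, s k = N) (ht : ∑ k, t k = N) :
    payoff α t s ≤ α / 2 * K := by
  have hK0 : (0 : ℝ) < K := by positivity
  have hKR : (2 : ℝ) ≤ K := by exact_mod_cast hK
  have hα' : 2 * ((K : ℝ) - 1) ≤ α * K := by rwa [div_le_iff₀ hK0] at hα
  have hα0 : (0 : ℝ) ≤ α := by
    have h1 : (0 : ℝ) ≤ 2 * ((K : ℝ) - 1) / K := by
      apply div_nonneg <;> [linarith; positivity]
    linarith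
  set A := Finset.univ.filter (fun k : Fin K => s k < t k) with hA
  set E := Finset.univ.filter (fun k : Fin K => t k = s k) with hE
  set L := Finset.univ.filter (fun k : Fin K => t k < s k) with hL
  have hpay : payoff α t s = (A.card : ℝ) + α / 2 * E.card := by
    rw [payoff, Finset.sum_add_distrib, ← Finset.mul_sum,
      Finset.sum_boole, Finset.sum_boole]
  have hcard : A.card + E.card + L.card = K := by
    have h1 : ∀ k : Fin K, (1 : ℕ) =
        (if s k < t k then 1 else 0) + (if t k = s k then 1 else 0)
          + (if t k < s k then 1 else 0) := by
      intro k
      rcases lt_trichotomy (s k) (t k) with h | h | h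
      · simp [h, h.ne', Nat.not_lt.mpr h.le]
      · simp [h, lt_irrefl]
      · simp [h, h.ne, Nat.not_lt.mpr h.le]
    have hsum := Finset.sum_congr rfl (fun k (_ : k ∈ Finset.univ) => h1 k)
    simp only [Finset.sum_add_distrib, Finset.sum_boole] at hsum
    simp only [Finset.sum_const, smul_eq_mul, mul_one, Finset.card_univ,
      Fintype.card_fin] at hsum
    simp only [hA, hE, hL]
    exact_mod_cast hsum.symm
  rw [hpay]
  have hc : (A.card : ℝ) + E.card + L.card = K := by exact_mod_cast hcard
  have he : (0 : ℝ) ≤ E.card := by positivity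
  rcases Nat.eq_zero_or_pos A.card with hA0 | hA1
  · rw [hA0]
    push_cast
    nlinarith
  · have hLpos : 0 < L.card := by
      rcases Finset.card_pos.mp hA1 with ⟨k0, hk0⟩
      by_contra h
      have hLe : L = ∅ := Finset.card_eq_zero.mp (by omega)
      have hle : ∀ k : Fin K, s k ≤ t k := by
        intro k
        by_contra hcn
        have : k ∈ L := by simp [hL, Nat.lt_of_not_le hcn]
        simp [hLe] at this
      have hk0' : s k0 < t k0 := by
        simp only [hA, Finset.mem_filter] at hk0; exact hk0.2
      have : ∑ k, s k < ∑ k, t k :=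
        Finset.sum_lt_sum (fun k _ => hle k) ⟨k0, Finset.mem_univ _, hk0'⟩
      omega
    have ha : (1 : ℝ) ≤ A.card := by exact_mod_cast hA1
    have hl : (1 : ℝ) ≤ L.card := by exact_mod_cast hLpos
    nlinarith [mul_nonneg (by linarith : (0:ℝ) ≤ (A.card:ℝ) + L.card)
        (by linarith : (0:ℝ) ≤ α * K - 2 * ((K:ℝ) - 1)),
      mul_nonneg (by linarith : (0:ℝ) ≤ (L.card:ℝ) - 1)
        (by linarith : (0:ℝ) ≤ (A.card:ℝ) + L.card),
      mul_nonneg (by linarith : (0:ℝ) ≤ (L.card:ℝ)) he]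

theorem stmt13 (N K : ℕ) (hN : 1 ≤ N) (hK : 2 ≤ K)
    (α : ℝ) (hα : 2 * ((K : ℝ) - 1) / K ≤ α)
    (s : Fin K → ℕ) (hs : s ∈ pureStrats K N) :
    IsNashEq α K N (fun t => if t = s then (1 : ℝ) else 0)
      (fun t => if t = s then (1 : ℝ) else 0) := by
  set δ : (Fin K → ℕ) → ℝ := fun t => if t = s then (1 : ℝ) else 0 with hδ
  have hdelta : IsMixed K N δ := by
    refine ⟨fun t => by dsimp [δ]; positivity, fun t ht => ?_, ?_⟩
    · have : t ≠ s := fun h => ht (h ▸ hs)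
      simp [δ, this]
    · simp [δ, Finset.sum_ite_eq' (pureStrats K N) s (fun _ => (1:ℝ)), hs]
  have hexp : ∀ σ' : (Fin K → ℕ) → ℝ,
      expPayoff α K N σ' δ = ∑ t ∈ pureStrats K N, σ' t * payoff α t s := by
    intro σ'
    unfold expPayoff
    refine Finset.sum_congr rfl fun t _ => ?_
    have : ∀ u ∈ pureStrats K N, σ' t * δ u * payoff α t u
        = if u = s then σ' t * payoff α t s else 0 := by
      intro u _
      by_cases h : u = s <;> simp [δ, h]
    rw [Finset.sum_congr rfl this, Finset.sum_ite_eq' (pureStrats K N) s]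
    simp [hs]
  have hself : expPayoff α K N δ δ = α / 2 * K := by
    rw [hexp]
    have : ∀ t ∈ pureStrats K N, δ t * payoff α t s
        = if t = s then payoff α s s else 0 := by
      intro t _
      by_cases h : t = s <;> simp [δ, h]
    rw [Finset.sum_congr rfl this, Finset.sum_ite_eq' (pureStrats K N) s]
    simp [hs, payoff_self]
  have hbound : ∀ σ', IsMixed K N σ' →
      expPayoff α K N σ' δ ≤ expPayoff α K N δ δ := by
    intro σ' ⟨h0, _, h1⟩
    rw [hself, hexp]
    calc ∑ t ∈ pureStrats K N, σ' t * payoff α t s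
        ≤ ∑ t ∈ pureStrats K N, σ' t * (α / 2 * K) := by
          refine Finset.sum_le_sum fun t htm => ?_
          refine mul_le_mul_of_nonneg_left ?_ (h0 t)
          exact payoff_le_key hK hα
            ((Finset.Nat.mem_antidiagonalTuple).mp hs)
            ((Finset.Nat.mem_antidiagonalTuple).mp htm)
      _ = α / 2 * K := by rw [← Finset.sum_mul, h1, one_mul]
  exact ⟨hdelta, hdelta, hbound, hbound⟩
end
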